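/- Let 1 ≤ p₁ ≤ p₂ < ∞, let φ₁ ∈ G_{p₁} and φ₂ ∈ G_{p₂}. Suppose there exists C' > 0 such that ‖x‖_{ℓ^{p₁}_{φ₁}} ≤ C' ‖x‖_{ℓ^{p₂}_{φ₂}} for every x ∈ ℓ^{p₂}_{φ₂}. Then there exists C > 0 such that φ₂(2N+1) ≤ C φ₁(2N+1) for every N ∈ ℕ. -/

import Mathlib

open scoped ENNReal NNReal BigOperators

/-- The discrete "ball" `S_{m,N} = {m-N, …, m+N}` as a finite set of integers. -/
noncomputable def S (m : ℤ) (N : ℕ) : Finset ℤ := Finset.Icc (m - N) (m + N)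

/-- The generalized discrete Morrey norm `‖x‖_{ℓ^p_φ}`. -/
noncomputable def gMorreyNorm (p : ℝ) (φ : ℕ → ℝ) (x : ℤ → ℂ) : ℝ≥0∞ :=
  ⨆ (m : ℤ) (N : ℕ),
    (ENNReal.ofReal (φ (2 * N + 1)))⁻¹ *
      ((2 * (N : ℝ≥0∞) + 1)⁻¹ * ∑ k ∈ S m N, (‖x k‖₊ : ℝ≥0∞) ^ p) ^ (1 / p)

/-!
Test the embedding on the indicator of a ball `S_{m₀,N₀}`. Its `ℓ^{p₁}_{φ₁}` norm is at least
`1/φ₁(2N₀+1)` (average over the ball itself), while every average in its `ℓ^{p₂}_{φ₂}` norm is at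
most a constant times `1/φ₂(2N₀+1)`: over smaller balls because `φ₂` is almost decreasing, over
larger ones because `(2N+1)^{1/p₂} φ₂(2N+1)` is almost increasing.
-/

lemma card_S (m : ℤ) (N : ℕ) : (S m N).card = 2 * N + 1 := by
  simp only [S, Int.card_Icc]; omega

lemma card_S_inter_le_left (m m₀ : ℤ) (N N₀ : ℕ) :
    ((S m N ∩ S m₀ N₀).card : ℝ) ≤ 2 * N + 1 := by
  exact_mod_cast card_S m N ▸ Finset.card_le_card Finset.inter_subset_left

lemma card_S_inter_le_right (m m₀ : ℤ) (N N₀ : ℕ) :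
    ((S m N ∩ S m₀ N₀).card : ℝ) ≤ 2 * N₀ + 1 := by
  exact_mod_cast card_S m₀ N₀ ▸ Finset.card_le_card Finset.inter_subset_right

noncomputable def ballIndicator (m₀ : ℤ) (N₀ : ℕ) : ℤ → ℂ :=
  Set.indicator (S m₀ N₀ : Set ℤ) 1

lemma sum_rpow_ballIndicator {p : ℝ} (hp : 0 < p) (m m₀ : ℤ) (N N₀ : ℕ) :
    ∑ k ∈ S m N, (‖ballIndicator m₀ N₀ k‖₊ : ℝ≥0∞) ^ p = (S m N ∩ S m₀ N₀).card := by
  have hterm : ∀ k, (‖ballIndicator m₀ N₀ k‖₊ : ℝ≥0∞) ^ p = if k ∈ S m₀ N₀ then 1 else 0 := by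
    intro k
    by_cases hk : k ∈ S m₀ N₀ <;> simp [ballIndicator, hk, ENNReal.zero_rpow_of_pos hp]
  simp only [hterm, Finset.sum_ite_mem, Finset.sum_const, nsmul_eq_mul, mul_one]

lemma inv_ofReal_mul_rpow_natCast {p f : ℝ} (hp : 0 ≤ p) (hf : 0 < f) (N n : ℕ) :
    (ENNReal.ofReal f)⁻¹ * ((2 * (N : ℝ≥0∞) + 1)⁻¹ * n) ^ (1 / p) =
      ENNReal.ofReal (f⁻¹ * ((2 * (N : ℝ) + 1)⁻¹ * n) ^ (1 / p)) := by
  have h2N : (2 * (N : ℝ≥0∞) + 1) = ENNReal.ofReal (2 * N + 1) := by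
    rw [ENNReal.ofReal_add (by positivity) zero_le_one, ENNReal.ofReal_mul zero_le_two]
    simp
  rw [h2N, ← ENNReal.ofReal_natCast n, ← ENNReal.ofReal_inv_of_pos hf,
    ← ENNReal.ofReal_inv_of_pos (by positivity : (0 : ℝ) < 2 * N + 1),
    ← ENNReal.ofReal_mul (by positivity), ENNReal.ofReal_rpow_of_nonneg (by positivity)
      (by positivity), ← ENNReal.ofReal_mul (by positivity)]

lemma inv_mul_rpow_le_of_mul_le {p u a f g c : ℝ} (hp : 0 ≤ p) (hu : 0 < u) (ha : 0 ≤ a)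
    (hau : a ≤ u) (hc : 0 < c) (hg : 0 < g) (hcg : c * g ≤ f) :
    f⁻¹ * (u⁻¹ * a) ^ (1 / p) ≤ c⁻¹ * g⁻¹ := by
  have hle_one : (u⁻¹ * a) ^ (1 / p) ≤ 1 :=
    Real.rpow_le_one (by positivity) ((inv_mul_le_iff₀ hu).2 (by simpa using hau))
      (by positivity)
  have hf : 0 < f := (mul_pos hc hg).trans_le hcg
  calc f⁻¹ * (u⁻¹ * a) ^ (1 / p) ≤ f⁻¹ * 1 := by gcongr
    _ ≤ (c * g)⁻¹ := by rw [mul_one]; gcongr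
    _ = c⁻¹ * g⁻¹ := mul_inv c g

lemma inv_mul_rpow_le_of_rpow_mul_le {p u v a f g C : ℝ} (hp : 0 ≤ p) (hu : 0 < u)
    (ha : 0 ≤ a) (hav : a ≤ v) (hf : 0 < f) (hg : 0 < g)
    (hvu : v ^ (1 / p) * g ≤ C * (u ^ (1 / p) * f)) :
    f⁻¹ * (u⁻¹ * a) ^ (1 / p) ≤ C * g⁻¹ := by
  have hu' : 0 < u ^ (1 / p) := Real.rpow_pos_of_pos hu _
  have hav' : (u⁻¹ * a) ^ (1 / p) ≤ v ^ (1 / p) / u ^ (1 / p) := by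
    rw [← Real.div_rpow (ha.trans hav) hu.le, div_eq_inv_mul v]
    gcongr
  calc f⁻¹ * (u⁻¹ * a) ^ (1 / p) ≤ f⁻¹ * (v ^ (1 / p) / u ^ (1 / p)) := by gcongr
    _ = v ^ (1 / p) * g / (u ^ (1 / p) * f) * g⁻¹ := by field_simp
    _ ≤ C * g⁻¹ := by gcongr; exact (div_le_iff₀ (by positivity)).2 hvu

lemma gMorreyNorm_ballIndicator_le {p : ℝ} (hp : 0 < p) {φ : ℕ → ℝ}
    (hφ : ∀ N : ℕ, 0 < φ (2 * N + 1)) {c C : ℝ} (hc : 0 < c)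
    (hdec : ∀ M N : ℕ, M ≤ N → c * φ (2 * N + 1) ≤ φ (2 * M + 1))
    (hinc : ∀ M N : ℕ, M ≤ N →
      (2 * (M : ℝ) + 1) ^ (1 / p) * φ (2 * M + 1) ≤
        C * ((2 * (N : ℝ) + 1) ^ (1 / p) * φ (2 * N + 1)))
    (m₀ : ℤ) (N₀ : ℕ) :
    gMorreyNorm p φ (ballIndicator m₀ N₀) ≤
      ENNReal.ofReal (max c⁻¹ C * (φ (2 * N₀ + 1))⁻¹) := by
  refine iSup₂_le fun m N => ?_
  rw [sum_rpow_ballIndicator hp, inv_ofReal_mul_rpow_natCast hp.le (hφ N)]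
  refine ENNReal.ofReal_le_ofReal ?_
  have hφ₀ := hφ N₀
  rcases le_total N N₀ with hN | hN
  · calc _ ≤ c⁻¹ * (φ (2 * N₀ + 1))⁻¹ :=
          inv_mul_rpow_le_of_mul_le hp.le (by positivity) (by positivity)
            (card_S_inter_le_left m m₀ N N₀) hc hφ₀ (hdec N N₀ hN)
      _ ≤ _ := by gcongr; exact le_max_left _ _
  · calc _ ≤ C * (φ (2 * N₀ + 1))⁻¹ :=
          inv_mul_rpow_le_of_rpow_mul_le hp.le (by positivity) (by positivity)
            (card_S_inter_le_right m m₀ N N₀) (hφ N) hφ₀ (hinc N₀ N hN)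
      _ ≤ _ := by gcongr; exact le_max_right _ _

lemma inv_ofReal_le_gMorreyNorm_ballIndicator (p : ℝ) (φ : ℕ → ℝ) (m₀ : ℤ) (N₀ : ℕ) :
    (ENNReal.ofReal (φ (2 * N₀ + 1)))⁻¹ ≤ gMorreyNorm p φ (ballIndicator m₀ N₀) := by
  refine le_iSup₂_of_le (f := fun (m : ℤ) (N : ℕ) => _) m₀ N₀ ?_
  have hsum : ∑ k ∈ S m₀ N₀, (‖ballIndicator m₀ N₀ k‖₊ : ℝ≥0∞) ^ p = 2 * N₀ + 1 := by
    rw [Finset.sum_congr rfl fun k hk => (by simp [ballIndicator, hk] : _ = (1 : ℝ≥0∞)),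
      Finset.sum_const, card_S]
    simp
  rw [hsum, ENNReal.inv_mul_cancel (by positivity) (by finiteness), ENNReal.one_rpow, mul_one]

theorem stmt13_general (p₁ p₂ : ℝ) (hp₁ : 1 ≤ p₁) (hp : p₁ ≤ p₂)
    (φ₁ φ₂ : ℕ → ℝ)
    (hφ₁pos : ∀ N : ℕ, 0 < φ₁ (2 * N + 1)) (hφ₂pos : ∀ N : ℕ, 0 < φ₂ (2 * N + 1))
    (hdec₂ : ∃ C : ℝ, 0 < C ∧ ∀ M N : ℕ, M ≤ N → C * φ₂ (2 * N + 1) ≤ φ₂ (2 * M + 1))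
    (hinc₂ : ∃ C : ℝ, 0 < C ∧ ∀ M N : ℕ, M ≤ N →
      (2 * (M : ℝ) + 1) ^ (1 / p₂) * φ₂ (2 * M + 1) ≤
        C * ((2 * (N : ℝ) + 1) ^ (1 / p₂) * φ₂ (2 * N + 1)))
    (C' : ℝ) (hC' : 0 < C')
    (hnorm : ∀ x : ℤ → ℂ, gMorreyNorm p₂ φ₂ x < ⊤ →
      gMorreyNorm p₁ φ₁ x ≤ ENNReal.ofReal C' * gMorreyNorm p₂ φ₂ x) :
    ∃ C : ℝ, 0 < C ∧ ∀ N : ℕ, φ₂ (2 * N + 1) ≤ C * φ₁ (2 * N + 1) := by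
  obtain ⟨c₂, hc₂, hdec₂⟩ := hdec₂
  obtain ⟨C₂, -, hinc₂⟩ := hinc₂
  set D := max c₂⁻¹ C₂
  have hD : 0 < D := (inv_pos.2 hc₂).trans_le (le_max_left _ _)
  refine ⟨C' * D, by positivity, fun N => ?_⟩
  have hφ₁ := hφ₁pos N
  have hφ₂ := hφ₂pos N
  have hupper := gMorreyNorm_ballIndicator_le (by linarith) hφ₂pos hc₂ hdec₂ hinc₂ 0 N
  have hbound : ENNReal.ofReal (φ₁ (2 * N + 1))⁻¹ ≤
      ENNReal.ofReal (C' * D * (φ₂ (2 * N + 1))⁻¹) := by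
    calc ENNReal.ofReal (φ₁ (2 * N + 1))⁻¹
        = (ENNReal.ofReal (φ₁ (2 * N + 1)))⁻¹ := ENNReal.ofReal_inv_of_pos hφ₁
      _ ≤ gMorreyNorm p₁ φ₁ (ballIndicator 0 N) :=
          inv_ofReal_le_gMorreyNorm_ballIndicator p₁ φ₁ 0 N
      _ ≤ ENNReal.ofReal C' * gMorreyNorm p₂ φ₂ (ballIndicator 0 N) :=
          hnorm _ (hupper.trans_lt ENNReal.ofReal_lt_top)
      _ ≤ ENNReal.ofReal C' * ENNReal.ofReal (D * (φ₂ (2 * N + 1))⁻¹) := by gcongr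
      _ = ENNReal.ofReal (C' * D * (φ₂ (2 * N + 1))⁻¹) := by
          rw [← ENNReal.ofReal_mul hC'.le, mul_assoc]
  rw [ENNReal.ofReal_le_ofReal_iff (by positivity), ← div_eq_mul_inv, le_div_iff₀ hφ₂,
    inv_mul_le_iff₀ hφ₁] at hbound
  linarith

theorem stmt13 (p₁ p₂ : ℝ) (hp₁ : 1 ≤ p₁) (hp : p₁ ≤ p₂)
    (φ₁ φ₂ : ℕ → ℝ)
    (hφ₁pos : ∀ N : ℕ, 0 < φ₁ (2 * N + 1)) (hφ₂pos : ∀ N : ℕ, 0 < φ₂ (2 * N + 1))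
    (hdec₁ : ∃ C : ℝ, 0 < C ∧ ∀ M N : ℕ, M ≤ N → C * φ₁ (2 * N + 1) ≤ φ₁ (2 * M + 1))
    (hinc₁ : ∃ C : ℝ, 0 < C ∧ ∀ M N : ℕ, M ≤ N →
      (2 * (M : ℝ) + 1) ^ (1 / p₁) * φ₁ (2 * M + 1) ≤
        C * ((2 * (N : ℝ) + 1) ^ (1 / p₁) * φ₁ (2 * N + 1)))
    (hdec₂ : ∃ C : ℝ, 0 < C ∧ ∀ M N : ℕ, M ≤ N → C * φ₂ (2 * N + 1) ≤ φ₂ (2 * M + 1))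
    (hinc₂ : ∃ C : ℝ, 0 < C ∧ ∀ M N : ℕ, M ≤ N →
      (2 * (M : ℝ) + 1) ^ (1 / p₂) * φ₂ (2 * M + 1) ≤
        C * ((2 * (N : ℝ) + 1) ^ (1 / p₂) * φ₂ (2 * N + 1)))
    (C' : ℝ) (hC' : 0 < C')
    (hnorm : ∀ x : ℤ → ℂ, gMorreyNorm p₂ φ₂ x < ⊤ →
      gMorreyNorm p₁ φ₁ x ≤ ENNReal.ofReal C' * gMorreyNorm p₂ φ₂ x) :
    ∃ C : ℝ, 0 < C ∧ ∀ N : ℕ, φ₂ (2 * N + 1) ≤ C * φ₁ (2 * N + 1) :=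
  stmt13_general p₁ p₂ hp₁ hp φ₁ φ₂ hφ₁pos hφ₂pos hdec₂ hinc₂ C' hC' hnorm
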